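/- Let H be a real Hilbert space with Hilbert basis (e_i)_{i∈I}, let T be a bounded linear operator on H, and let N ≥ 1 be an integer. Then ∑_{j=1}^{N} a_j(T)² ≤ ∑_{i∈I} ‖T e_i‖² (an inequality in [0,∞]). -/

import Mathlib

open scoped ENNReal

/-- The `j`-th approximation number of a bounded linear operator `T` on a real Hilbert
space: `a_j(T) = inf{‖T - F‖ : F bounded linear, dim(range F) < j}`. -/
noncomputable def approxNumber {H : Type*} [NormedAddCommGroup H]
    [InnerProductSpace ℝ H] (T : H →L[ℝ] H) (j : ℕ) : ℝ :=
  sInf {x : ℝ | ∃ F : H →L[ℝ] H,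
    Module.rank ℝ (LinearMap.range (F : H →ₗ[ℝ] H)) < (j : Cardinal) ∧ x = ‖T - F‖}

/-
Fix `ε > 0` and choose orthonormal vectors greedily. Given `v₁, …, vₘ` with `m ≤ n`, the operator
`T ∘ P`, `P` the orthogonal projection onto their span, has rank `< n + 1`, so `a_{n+1}(T)` is at
most `‖T - T ∘ P‖`, the norm of `T` on the orthogonal complement. Hence if `a_{n+1}(T)² > ε` there
is a unit vector `v_{m+1} ⊥ v₁, …, vₘ` with `a_{n+1}(T)² < ‖T v_{m+1}‖² + ε`; otherwise the step
adds no vector. This gives `∑_{j ≤ N} a_j(T)² ≤ ∑_k ‖T v_k‖² + N ε`. Finally, Parseval in both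
variables shows `∑ ‖T† f_k‖² = ∑ ‖T e_i‖²` for Hilbert bases `e`, `f`, and Bessel's inequality for
the vectors `T† f_k` bounds `∑_k ‖T v_k‖²` by this Hilbert–Schmidt sum.
-/

open scoped InnerProductSpace InnerProduct

theorem enorm_inner_symm {𝕜 E : Type*} [RCLike 𝕜] [NormedAddCommGroup E] [InnerProductSpace 𝕜 E]
    (x y : E) : ‖⟪x, y⟫_𝕜‖ₑ = ‖⟪y, x⟫_𝕜‖ₑ := by
  rw [← inner_conj_symm, RCLike.enorm_conj]

namespace HilbertBasis

variable {ι κ 𝕜 E F : Type*} [RCLike 𝕜] [NormedAddCommGroup E] [InnerProductSpace 𝕜 E]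
  [NormedAddCommGroup F] [InnerProductSpace 𝕜 F]

theorem hasSum_norm_inner_sq (b : HilbertBasis ι 𝕜 E) (x : E) :
    HasSum (fun i => ‖⟪b i, x⟫_𝕜‖ ^ 2) (‖x‖ ^ 2) := by
  simpa [b.repr_apply_apply] using lp.hasSum_norm (p := 2) (by norm_num) (b.repr x)

theorem enorm_sq_eq_tsum (b : HilbertBasis ι 𝕜 E) (x : E) :
    ‖x‖ₑ ^ 2 = ∑' i, ‖⟪b i, x⟫_𝕜‖ₑ ^ 2 := by
  simp only [← ofReal_norm, ← ENNReal.ofReal_pow (norm_nonneg _)]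
  rw [← (b.hasSum_norm_inner_sq x).tsum_eq,
    ENNReal.ofReal_tsum_of_nonneg (fun _ => by positivity) (b.hasSum_norm_inner_sq x).summable]

variable [CompleteSpace E] [CompleteSpace F]

theorem tsum_enorm_adjoint_apply_sq (b : HilbertBasis ι 𝕜 E) (c : HilbertBasis κ 𝕜 F)
    (T : E →L[𝕜] F) :
    ∑' k, ‖(T†) (c k)‖ₑ ^ 2 = ∑' i, ‖T (b i)‖ₑ ^ 2 := by
  calc ∑' k, ‖(T†) (c k)‖ₑ ^ 2 = ∑' k, ∑' i, ‖⟪b i, (T†) (c k)⟫_𝕜‖ₑ ^ 2 := by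
        simp only [b.enorm_sq_eq_tsum]
    _ = ∑' i, ∑' k, ‖⟪c k, T (b i)⟫_𝕜‖ₑ ^ 2 := by
        rw [ENNReal.tsum_comm]
        simp only [ContinuousLinearMap.adjoint_inner_right, enorm_inner_symm]
    _ = ∑' i, ‖T (b i)‖ₑ ^ 2 := by simp only [← c.enorm_sq_eq_tsum]

end HilbertBasis

namespace Orthonormal

variable {ι κ 𝕜 E F : Type*} [RCLike 𝕜] [NormedAddCommGroup E] [InnerProductSpace 𝕜 E]
  [NormedAddCommGroup F] [InnerProductSpace 𝕜 F]

theorem sum_enorm_inner_sq_le {v : ι → E} (hv : Orthonormal 𝕜 v) (s : Finset ι) (x : E) :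
    ∑ i ∈ s, ‖⟪v i, x⟫_𝕜‖ₑ ^ 2 ≤ ‖x‖ₑ ^ 2 := by
  simp only [← ofReal_norm, ← ENNReal.ofReal_pow (norm_nonneg _)]
  rw [← ENNReal.ofReal_sum_of_nonneg (fun _ _ => by positivity)]
  exact ENNReal.ofReal_le_ofReal (hv.sum_inner_products_le x)

theorem sum_enorm_apply_sq_le_tsum [CompleteSpace E] [CompleteSpace F]
    (b : HilbertBasis ι 𝕜 E) (T : E →L[𝕜] F) {v : κ → E} (hv : Orthonormal 𝕜 v) (s : Finset κ) :
    ∑ j ∈ s, ‖T (v j)‖ₑ ^ 2 ≤ ∑' i, ‖T (b i)‖ₑ ^ 2 := by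
  obtain ⟨w, c, -⟩ := exists_hilbertBasis 𝕜 F
  calc ∑ j ∈ s, ‖T (v j)‖ₑ ^ 2 = ∑' k, ∑ j ∈ s, ‖⟪v j, (T†) (c k)⟫_𝕜‖ₑ ^ 2 := by
        simp only [c.enorm_sq_eq_tsum, ContinuousLinearMap.adjoint_inner_right]
        rw [← Summable.tsum_finsetSum fun _ _ => ENNReal.summable]
        simp only [enorm_inner_symm]
    _ ≤ ∑' k, ‖(T†) (c k)‖ₑ ^ 2 := ENNReal.tsum_le_tsum fun k => hv.sum_enorm_inner_sq_le s _
    _ = ∑' i, ‖T (b i)‖ₑ ^ 2 := b.tsum_enorm_adjoint_apply_sq c T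

end Orthonormal

section approxNumber

variable {H : Type*} [NormedAddCommGroup H] [InnerProductSpace ℝ H] (T : H →L[ℝ] H)

theorem approxNumber_nonneg (j : ℕ) : 0 ≤ approxNumber T j :=
  Real.sInf_nonneg fun _ ⟨_, _, hx⟩ => hx ▸ norm_nonneg _

theorem approxNumber_le_norm_sub (F : H →L[ℝ] H) {j : ℕ}
    (hF : Module.rank ℝ (LinearMap.range (F : H →ₗ[ℝ] H)) < j) :
    approxNumber T j ≤ ‖T - F‖ :=
  csInf_le ⟨0, fun _ ⟨_, _, hx⟩ => hx ▸ norm_nonneg _⟩ ⟨F, hF, rfl⟩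

theorem approxNumber_le_norm_comp_subtypeL_orthogonal (K : Submodule ℝ H)
    [K.HasOrthogonalProjection] {j : ℕ} (hK : Module.rank ℝ K < j) :
    approxNumber T j ≤ ‖T ∘L Kᗮ.subtypeL‖ := by
  have hrange : LinearMap.range ((T ∘L K.starProjection : H →L[ℝ] H) : H →ₗ[ℝ] H) =
      K.map (T : H →ₗ[ℝ] H) := by
    rw [ContinuousLinearMap.toLinearMap_comp, LinearMap.range_comp]
    congr
    exact K.range_starProjection
  calc approxNumber T j ≤ ‖T - T ∘L K.starProjection‖ :=
        approxNumber_le_norm_sub T _ (hrange ▸ (rank_map_le _ K).trans_lt hK)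
    _ = ‖(T ∘L Kᗮ.subtypeL) ∘L Kᗮ.orthogonalProjectionOnto‖ := by
        rw [ContinuousLinearMap.comp_assoc, ← Submodule.starProjection,
          Submodule.starProjection_orthogonal', ContinuousLinearMap.comp_sub,
          ContinuousLinearMap.one_def, ContinuousLinearMap.comp_id]
    _ ≤ ‖T ∘L Kᗮ.subtypeL‖ * ‖Kᗮ.orthogonalProjectionOnto‖ := ContinuousLinearMap.opNorm_comp_le _ _
    _ ≤ ‖T ∘L Kᗮ.subtypeL‖ :=
        mul_le_of_le_one_right (by positivity) Kᗮ.orthogonalProjectionOnto_norm_le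

theorem exists_mem_orthogonal_norm_eq_one_lt_norm_apply (K : Submodule ℝ H)
    [K.HasOrthogonalProjection] {j : ℕ} (hK : Module.rank ℝ K < j) {c : ℝ} (hc : 0 ≤ c)
    (hcj : c < approxNumber T j) : ∃ x ∈ Kᗮ, ‖x‖ = 1 ∧ c < ‖T x‖ := by
  lift c to NNReal using hc
  obtain ⟨x, hx, hcx⟩ := (T ∘L Kᗮ.subtypeL).exists_nnnorm_eq_one_lt_apply_of_lt_opNNNorm
    (r := c) (hcj.trans_le (approxNumber_le_norm_comp_subtypeL_orthogonal T K hK))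
  exact ⟨x, x.2, congrArg NNReal.toReal hx, hcx⟩

theorem exists_orthonormal_sum_approxNumber_sq_le {ε : ℝ} (hε : 0 < ε) (n : ℕ) :
    ∃ m ≤ n, ∃ v : Fin m → H, Orthonormal ℝ v ∧
      ∑ j ∈ Finset.Icc 1 n, approxNumber T j ^ 2 ≤ ∑ i, ‖T (v i)‖ ^ 2 + n * ε := by
  induction n with
  | zero => exact ⟨0, le_rfl, Fin.elim0, .of_isEmpty _, by simp⟩
  | succ n ih =>
    obtain ⟨m, hmn, v, hv, hsum⟩ := ih
    set a := approxNumber T (n + 1)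
    rw [Finset.sum_Icc_succ_top (by omega), Nat.cast_succ]
    by_cases hsmall : a ^ 2 ≤ ε
    · exact ⟨m, by omega, v, hv, by linarith⟩
    set K := Submodule.span ℝ (Set.range v)
    have : FiniteDimensional ℝ K := FiniteDimensional.span_of_finite ℝ (Set.finite_range v)
    have hK : Module.rank ℝ K < (n + 1 : ℕ) := by
      calc Module.rank ℝ K ≤ Cardinal.mk (Set.range v) := rank_span_le _
        _ ≤ m := by simpa using Cardinal.mk_range_le_lift (f := v)
        _ < (n + 1 : ℕ) := by exact_mod_cast Nat.lt_succ_of_le hmn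
    have ha : 0 < a := by nlinarith [approxNumber_nonneg T (n + 1)]
    obtain ⟨x, hxK, hx1, hTx⟩ := exists_mem_orthogonal_norm_eq_one_lt_norm_apply T K hK
      (Real.sqrt_nonneg (a ^ 2 - ε)) ((Real.sqrt_lt' ha).2 (by linarith))
    have hTx_sq : a ^ 2 - ε < ‖T x‖ ^ 2 :=
      (Real.sqrt_lt' ((Real.sqrt_nonneg _).trans_lt hTx)).1 hTx
    refine ⟨m + 1, by omega, Matrix.vecCons x v,
      orthonormal_vecCons_iff.2 ⟨hx1, fun i => ?_, hv⟩, ?_⟩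
    · exact (K.mem_orthogonal' x).1 hxK _ (Submodule.subset_span (Set.mem_range_self i))
    · rw [Fin.sum_univ_succ]
      simp only [Matrix.cons_val_zero, Matrix.cons_val_succ]
      linarith

end approxNumber

theorem statement11_general {I : Type*} {H : Type*} [NormedAddCommGroup H]
    [InnerProductSpace ℝ H] [CompleteSpace H] (b : HilbertBasis I ℝ H)
    (T : H →L[ℝ] H) (N : ℕ) :
    ∑ j ∈ Finset.Icc 1 N, ENNReal.ofReal (approxNumber T j ^ 2) ≤
      ∑' i, (‖T (b i)‖₊ : ℝ≥0∞) ^ 2 := by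
  refine ENNReal.le_of_forall_pos_le_add fun ε hε _ => ?_
  obtain ⟨m, -, v, hv, hsum⟩ :=
    exists_orthonormal_sum_approxNumber_sq_le T (ε := ε / (N + 1)) (by positivity) N
  have hNε : (N : ℝ) * (ε / (N + 1)) ≤ ε := by
    rw [mul_div_assoc', div_le_iff₀ (by positivity)]
    nlinarith [ε.2]
  calc ∑ j ∈ Finset.Icc 1 N, ENNReal.ofReal (approxNumber T j ^ 2)
      = ENNReal.ofReal (∑ j ∈ Finset.Icc 1 N, approxNumber T j ^ 2) :=
        (ENNReal.ofReal_sum_of_nonneg fun _ _ => sq_nonneg _).symm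
    _ ≤ ENNReal.ofReal (∑ k, ‖T (v k)‖ ^ 2) + ENNReal.ofReal ε :=
        (ENNReal.ofReal_le_ofReal (by linarith)).trans ENNReal.ofReal_add_le
    _ = ∑ k, ‖T (v k)‖ₑ ^ 2 + ε := by
        rw [ENNReal.ofReal_sum_of_nonneg fun _ _ => sq_nonneg _, ENNReal.ofReal_coe_nnreal]
        simp only [ENNReal.ofReal_pow (norm_nonneg _), ofReal_norm]
    _ ≤ ∑' i, ‖T (b i)‖ₑ ^ 2 + ε := by
        gcongr
        exact hv.sum_enorm_apply_sq_le_tsum b T Finset.univ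

/-- If `(e_i)_{i∈I}` is a Hilbert basis of the real Hilbert space `H`, `T` is a
bounded operator on `H`, and `N ≥ 1`, then `∑_{j=1}^N a_j(T)² ≤ ∑_{i∈I} ‖T e_i‖²`
(an inequality in `[0,∞]`). -/
theorem statement11 {I : Type*} {H : Type*} [NormedAddCommGroup H]
    [InnerProductSpace ℝ H] [CompleteSpace H] (b : HilbertBasis I ℝ H)
    (T : H →L[ℝ] H) (N : ℕ) (hN : 1 ≤ N) :
    ∑ j ∈ Finset.Icc 1 N, ENNReal.ofReal (approxNumber T j ^ 2) ≤
      ∑' i, (‖T (b i)‖₊ : ℝ≥0∞) ^ 2 :=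
  statement11_general b T N
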